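/- For the single-subcarrier context-aware power allocation game with linear costs and any power budget P_max > 0, a pure-strategy Nash equilibrium exists: there is at least one profile (u₁*,…,u_M*) ∈ A^M such that for every player i and every v ∈ A, J_i(u₁*,…,v,…,u_M*) ≤ J_i(u₁*,…,u_M*). -/

import Mathlib

/-!
The game is an exact potential game: with total received power
`T j u = ∑ l, β l j * u l j + σsq j`, the utility of player `i` is
`∑ j, log (T j u) - ∑ l, cost l (u l)` plus terms that do not depend on `u i`, because
`log (1 + x / O) = log (O + x) - log O`. A maximiser of this continuous potential over the
compact set of profiles is a Nash equilibrium.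
-/

open Finset Function Set

section PotentialGame

variable {ι : Type*} [DecidableEq ι] {X : ι → Type*}

def IsExactPotentialOn (S : ∀ i, Set (X i)) (J : ι → (∀ i, X i) → ℝ) (Φ : (∀ i, X i) → ℝ) :
    Prop :=
  ∀ i, ∀ u ∈ univ.pi S, ∀ v ∈ S i, J i (update u i v) - J i u = Φ (update u i v) - Φ u

theorem IsExactPotentialOn.exists_nash [∀ i, TopologicalSpace (X i)] {S : ∀ i, Set (X i)}
    {J : ι → (∀ i, X i) → ℝ} {Φ : (∀ i, X i) → ℝ} (hΦ : IsExactPotentialOn S J Φ)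
    (hS : ∀ i, IsCompact (S i)) (hne : ∀ i, (S i).Nonempty) (hcont : ContinuousOn Φ (univ.pi S)) :
    ∃ u ∈ univ.pi S, ∀ i, ∀ v ∈ S i, J i (update u i v) ≤ J i u := by
  obtain ⟨u, hu, hmax⟩ :=
    (isCompact_univ_pi hS).exists_isMaxOn (univ_pi_nonempty_iff.2 hne) hcont
  refine ⟨u, hu, fun i v hv => ?_⟩
  have hdev : Φ (update u i v) ≤ Φ u :=
    hmax ((update_mem_pi_iff_of_mem hu).2 fun _ => hv)
  linarith [hΦ i u hu v hv]

end PotentialGame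

section PowerBudget

variable {κ : Type*} [Fintype κ]

def powerBudgetSet (P : ℝ) : Set (κ → ℝ) := {u | (∀ j, 0 ≤ u j) ∧ ∑ j, u j ≤ P}

theorem powerBudgetSet_subset_pi_Icc (P : ℝ) :
    powerBudgetSet P ⊆ univ.pi fun _ : κ => Icc 0 P :=
  fun _ ⟨h0, hsum⟩ j _ => ⟨h0 j, (single_le_sum (fun k _ => h0 k) (mem_univ j)).trans hsum⟩

theorem isCompact_powerBudgetSet (P : ℝ) : IsCompact (powerBudgetSet (κ := κ) P) := by
  have hclosed : IsClosed (powerBudgetSet (κ := κ) P) := by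
    refine IsClosed.inter (isClosed_Ici (a := (0 : κ → ℝ))) ?_
    exact isClosed_le (continuous_finsetSum _ fun j _ => continuous_apply j) continuous_const
  exact (isCompact_univ_pi fun _ => isCompact_Icc).of_isClosed_subset hclosed
    (powerBudgetSet_subset_pi_Icc P)

theorem zero_mem_powerBudgetSet {P : ℝ} (hP : 0 ≤ P) : (0 : κ → ℝ) ∈ powerBudgetSet P :=
  ⟨fun _ => le_rfl, by simpa using hP⟩

end PowerBudget

noncomputable section PowerAllocationGame

variable {ι κ : Type*} [Fintype ι] (β : ι → κ → ℝ) (σsq : κ → ℝ) (a b : ι → κ → ℝ)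

section Potential

variable [Fintype κ]

def powerCost (l : ι) (w : κ → ℝ) : ℝ := ∑ j, (a l j * w j + b l j)

def powerPotential (u : ι → κ → ℝ) : ℝ :=
  ∑ j, Real.log (∑ l, β l j * u l j + σsq j) - ∑ l, powerCost a b l (u l)

variable {β σsq} in
theorem continuousOn_powerPotential (hβ : ∀ i j, 0 ≤ β i j) (hσ : ∀ j, 0 < σsq j)
    {S : ι → Set (κ → ℝ)} (hS : ∀ i, ∀ w ∈ S i, ∀ j, 0 ≤ w j) :
    ContinuousOn (powerPotential β σsq a b) (univ.pi S) := by
  refine ContinuousOn.sub (continuousOn_finsetSum _ fun j _ => ?_)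
    (by unfold powerCost; fun_prop)
  refine ContinuousOn.log (by fun_prop) fun u hu => (add_pos_of_nonneg_of_pos ?_ (hσ j)).ne'
  exact sum_nonneg fun l _ => mul_nonneg (hβ l j) (hS l _ (hu l trivial) j)

end Potential

variable [DecidableEq ι]

def interferenceNoise (i : ι) (u : ι → κ → ℝ) (j : κ) : ℝ :=
  ∑ l ∈ univ.erase i, β l j * u l j + σsq j

variable {β σsq} in
theorem interferenceNoise_pos (hβ : ∀ i j, 0 ≤ β i j) (hσ : ∀ j, 0 < σsq j) {u : ι → κ → ℝ}
    (hu : ∀ l j, 0 ≤ u l j) (i : ι) (j : κ) : 0 < interferenceNoise β σsq i u j :=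
  add_pos_of_nonneg_of_pos (sum_nonneg fun l _ => mul_nonneg (hβ l j) (hu l j)) (hσ j)

theorem interferenceNoise_update (i : ι) (u : ι → κ → ℝ) (v : κ → ℝ) :
    interferenceNoise β σsq i (update u i v) = interferenceNoise β σsq i u := by
  funext j
  refine congrArg (· + σsq j) (sum_congr rfl fun l hl => ?_)
  rw [update_of_ne (ne_of_mem_erase hl)]

variable [Fintype κ]

def powerUtility (i : ι) (u : ι → κ → ℝ) : ℝ :=
  ∑ j, Real.log (1 + β i j * u i j / interferenceNoise β σsq i u j) - powerCost a b i (u i)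

def powerUtilityResidual (i : ι) (u : ι → κ → ℝ) : ℝ :=
  ∑ l ∈ univ.erase i, powerCost a b l (u l) - ∑ j, Real.log (interferenceNoise β σsq i u j)

theorem powerUtilityResidual_update (i : ι) (u : ι → κ → ℝ) (v : κ → ℝ) :
    powerUtilityResidual β σsq a b i (update u i v) = powerUtilityResidual β σsq a b i u := by
  unfold powerUtilityResidual
  rw [interferenceNoise_update]
  congr 1
  exact sum_congr rfl fun l hl => by rw [update_of_ne (ne_of_mem_erase hl)]

variable {β σsq}

theorem powerUtility_eq_potential_add_residual (hβ : ∀ i j, 0 ≤ β i j)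
    (hσ : ∀ j, 0 < σsq j) {u : ι → κ → ℝ} (hu : ∀ l j, 0 ≤ u l j) (i : ι) :
    powerUtility β σsq a b i u =
      powerPotential β σsq a b u + powerUtilityResidual β σsq a b i u := by
  have hlog : ∀ j, Real.log (1 + β i j * u i j / interferenceNoise β σsq i u j) =
      Real.log (∑ l, β l j * u l j + σsq j) - Real.log (interferenceNoise β σsq i u j) := by
    intro j
    have hO := interferenceNoise_pos hβ hσ hu i j
    have htotal : ∑ l, β l j * u l j + σsq j = interferenceNoise β σsq i u j + β i j * u i j := by
      rw [interferenceNoise, ← add_sum_erase univ _ (mem_univ i)]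
      ring
    rw [htotal, ← Real.log_div (add_pos_of_pos_of_nonneg hO (mul_nonneg (hβ i j) (hu i j))).ne'
      hO.ne', add_div, div_self hO.ne', add_comm]
  have hcost : ∑ l, powerCost a b l (u l) =
      powerCost a b i (u i) + ∑ l ∈ univ.erase i, powerCost a b l (u l) :=
    (add_sum_erase univ _ (mem_univ i)).symm
  simp only [powerUtility, powerPotential, powerUtilityResidual, hlog, sum_sub_distrib, hcost]
  ring

theorem isExactPotentialOn_powerPotential (hβ : ∀ i j, 0 ≤ β i j) (hσ : ∀ j, 0 < σsq j)
    {S : ι → Set (κ → ℝ)} (hS : ∀ i, ∀ w ∈ S i, ∀ j, 0 ≤ w j) :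
    IsExactPotentialOn S (powerUtility β σsq a b) (powerPotential β σsq a b) := by
  intro i u hu v hv
  have hu₀ : ∀ l j, 0 ≤ u l j := fun l => hS l _ (hu l trivial)
  have hu'₀ : ∀ l j, 0 ≤ update u i v l j := fun l => by
    rcases eq_or_ne l i with rfl | hl
    · simpa using hS l v hv
    · simpa [update_of_ne hl] using hu₀ l
  rw [powerUtility_eq_potential_add_residual a b hβ hσ hu'₀,
    powerUtility_eq_potential_add_residual a b hβ hσ hu₀, powerUtilityResidual_update]
  ring

end PowerAllocationGame

/-- **Existence of a pure-strategy Nash equilibrium for the single-subcarrier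
context-aware power allocation game with linear costs**, for any power budget
`Pmax > 0`.

Players are the `M` base stations, the common (convex, compact) action set is
`A = {u : Fin N → ℝ | 0 ≤ u j ∀ j, ∑ j, u j ≤ Pmax}`, and the utility of
player `i` at profile `u` is
`J i u = ∑ j, log (1 + β i j * u i j / (∑_{l ≠ i} β l j * u l j + σ² j))
         − ∑ j, (a i j * u i j + b i j)`.
Then there is at least one profile `(u₁*, …, u_M*) ∈ A^M` such that no player
can improve its utility by a unilateral deviation. -/
theorem single_subcarrier_game_PSNE_exists
    (M N : ℕ)
    (β : Fin M → Fin N → ℝ) (σsq : Fin N → ℝ)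
    (a b : Fin M → Fin N → ℝ)
    (Pmax : ℝ) (hP : 0 < Pmax)
    (hβ : ∀ i j, 0 < β i j) (hσ : ∀ j, 0 < σsq j)
    (A : Set (Fin N → ℝ))
    (hA : A = {u : Fin N → ℝ | (∀ j, 0 ≤ u j) ∧ ∑ j, u j ≤ Pmax})
    (J : Fin M → (Fin M → Fin N → ℝ) → ℝ)
    (hJ : ∀ i u, J i u =
      (∑ j, Real.log (1 + β i j * u i j /
        ((∑ l ∈ Finset.univ.erase i, β l j * u l j) + σsq j)))
      - ∑ j, (a i j * u i j + b i j)) :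
    ∃ ustar : Fin M → Fin N → ℝ,
      (∀ i, ustar i ∈ A) ∧
      (∀ i : Fin M, ∀ v ∈ A, J i (Function.update ustar i v) ≤ J i ustar) := by
  have hA' : A = powerBudgetSet (κ := Fin N) Pmax := hA
  have hJ' : J = powerUtility β σsq a b := funext fun i => funext (hJ i)
  subst hA' hJ'
  have hβ₀ : ∀ i j, 0 ≤ β i j := fun i j => (hβ i j).le
  have hS : ∀ i : Fin M, ∀ w ∈ powerBudgetSet (κ := Fin N) Pmax, ∀ j, 0 ≤ w j :=
    fun _ _ hw => hw.1
  obtain ⟨u, hu, hnash⟩ := (isExactPotentialOn_powerPotential a b hβ₀ hσ hS).exists_nash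
    (fun _ => isCompact_powerBudgetSet Pmax) (fun _ => ⟨0, zero_mem_powerBudgetSet hP.le⟩)
    (continuousOn_powerPotential a b hβ₀ hσ hS)
  exact ⟨u, fun i => hu i trivial, hnash⟩
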